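/- arXiv:1412.0601 — 3 statements merged into one kernel-verified Lean document; each statement's English description precedes it below -/
import Mathlib

section
/- Let f₁, f₂, f₃, f₄ : ℂ → ℂ be holomorphic functions and define F : ℂ → ℂ² ≅ ℝ⁴ by F(z) = (f₁(z) + conj(f₂(z)), f₃(z) + conj(f₄(z))). Then F is conformal (i.e. |∂F/∂x| = |∂F/∂y| and ⟨∂F/∂x, ∂F/∂y⟩ = 0 with respect to the real inner product on ℝ⁴) if and only if f₁′f₂′ + f₃′f₄′ = 0 identically. -/
/-!
Writing `a, b` for the derivatives of the holomorphic and antiholomorphic parts of one coordinate,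
`∂F/∂x` has that coordinate `a + conj b` and `∂F/∂y` has `i a - i conj b`. Per coordinate,
`|∂ₓ|² - |∂ᵧ|² = 4 Re (a b)` and `Re (∂ₓ conj ∂ᵧ) = -2 Im (a b)`, so summing over both coordinates,
the two conformality conditions are exactly the vanishing of the real and imaginary parts of
`f₁' f₂' + f₃' f₄'`.
-/

open Complex

/-- The minimal-surface parametrization built from four holomorphic functions. -/
noncomputable def Fmin (f₁ f₂ f₃ f₄ : ℂ → ℂ) : ℂ → ℂ × ℂ := fun z =>
  (f₁ z + (starRingEnd ℂ) (f₂ z), f₃ z + (starRingEnd ℂ) (f₄ z))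

open ComplexConjugate ContinuousLinearMap

theorem HasDerivAt.hasFDerivAt_add_conj {f g : ℂ → ℂ} {f' g' z : ℂ}
    (hf : HasDerivAt f f' z) (hg : HasDerivAt g g' z) :
    HasFDerivAt (fun w => f w + conj (g w))
      ((toSpanSingleton ℂ f').restrictScalars ℝ +
        conjCLE.toContinuousLinearMap.comp ((toSpanSingleton ℂ g').restrictScalars ℝ)) z :=
  (hf.hasFDerivAt.restrictScalars ℝ).add
    (conjCLE.toContinuousLinearMap.hasFDerivAt.comp z (hg.hasFDerivAt.restrictScalars ℝ))

theorem fderiv_Fmin_apply {f₁ f₂ f₃ f₄ : ℂ → ℂ} {z : ℂ}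
    (h₁ : DifferentiableAt ℂ f₁ z) (h₂ : DifferentiableAt ℂ f₂ z)
    (h₃ : DifferentiableAt ℂ f₃ z) (h₄ : DifferentiableAt ℂ f₄ z) (v : ℂ) :
    fderiv ℝ (Fmin f₁ f₂ f₃ f₄) z v =
      (deriv f₁ z * v + conj (deriv f₂ z * v), deriv f₃ z * v + conj (deriv f₄ z * v)) := by
  have H := (HasDerivAt.hasFDerivAt_add_conj h₁.hasDerivAt h₂.hasDerivAt).prodMk
    (HasDerivAt.hasFDerivAt_add_conj h₃.hasDerivAt h₄.hasDerivAt)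
  unfold Fmin
  rw [H.fderiv]
  simp [mul_comm]

theorem normSq_add_conj_sub_normSq_mul_I (a b : ℂ) :
    normSq (a + conj b) - normSq (a * I + conj (b * I)) = 4 * (a * b).re := by
  simp only [normSq_apply, add_re, add_im, mul_re, mul_im, conj_re, conj_im, I_re, I_im]
  ring

theorem re_add_conj_mul_conj_mul_I (a b : ℂ) :
    ((a + conj b) * conj (a * I + conj (b * I))).re = -2 * (a * b).im := by
  simp only [add_re, add_im, mul_re, mul_im, conj_re, conj_im, I_re, I_im]
  ring

theorem conformal_add_conj_iff (a b c d : ℂ) :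
    (normSq (a + conj b) + normSq (c + conj d) =
        normSq (a * I + conj (b * I)) + normSq (c * I + conj (d * I)) ∧
      ((a + conj b) * conj (a * I + conj (b * I)) +
        (c + conj d) * conj (c * I + conj (d * I))).re = 0) ↔
    a * b + c * d = 0 := by
  have hab := normSq_add_conj_sub_normSq_mul_I a b
  have hcd := normSq_add_conj_sub_normSq_mul_I c d
  rw [Complex.ext_iff, add_re, add_im, zero_re, zero_im, add_re, re_add_conj_mul_conj_mul_I,
    re_add_conj_mul_conj_mul_I]
  exact and_congr ⟨fun h => by linarith, fun h => by linarith⟩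
    ⟨fun h => by linarith, fun h => by linarith⟩

theorem stmt_5 (f₁ f₂ f₃ f₄ : ℂ → ℂ)
    (h₁ : Differentiable ℂ f₁) (h₂ : Differentiable ℂ f₂)
    (h₃ : Differentiable ℂ f₃) (h₄ : Differentiable ℂ f₄) :
    (∀ z : ℂ,
      Complex.normSq (fderiv ℝ (Fmin f₁ f₂ f₃ f₄) z 1).1 +
          Complex.normSq (fderiv ℝ (Fmin f₁ f₂ f₃ f₄) z 1).2 =
        Complex.normSq (fderiv ℝ (Fmin f₁ f₂ f₃ f₄) z I).1 +
          Complex.normSq (fderiv ℝ (Fmin f₁ f₂ f₃ f₄) z I).2 ∧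
      ((fderiv ℝ (Fmin f₁ f₂ f₃ f₄) z 1).1 *
          (starRingEnd ℂ) (fderiv ℝ (Fmin f₁ f₂ f₃ f₄) z I).1 +
        (fderiv ℝ (Fmin f₁ f₂ f₃ f₄) z 1).2 *
          (starRingEnd ℂ) (fderiv ℝ (Fmin f₁ f₂ f₃ f₄) z I).2).re = 0) ↔
    ∀ z : ℂ, deriv f₁ z * deriv f₂ z + deriv f₃ z * deriv f₄ z = 0 := by
  refine forall_congr' fun z => ?_
  simp only [fderiv_Fmin_apply (h₁ z) (h₂ z) (h₃ z) (h₄ z), mul_one]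
  exact conformal_add_conj_iff _ _ _ _
end

section
/- Let N ≥ 2 be an integer. Define H : ℂ → ℂ² by H(z) = (2z^N + z̄^N, −(2N²/(2N−1)) z^{2N−1} + z̄). Then the number of unordered pairs {z₁, z₂} with z₁ ≠ z₂ and H(z₁) = H(z₂) is exactly N(N−1). -/
open Complex

/-- The degenerate minimal surface H(z) = (2zᴺ + z̄ᴺ, −(2N²/(2N−1)) z^{2N−1} + z̄). -/
noncomputable def Hdeg (N : ℕ) : ℂ → ℂ × ℂ := fun z =>
  (2 * z ^ N + (starRingEnd ℂ) z ^ N,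
   -((2 * (N : ℂ) ^ 2) / (2 * (N : ℂ) - 1)) * z ^ (2 * N - 1) + (starRingEnd ℂ) z)

/-!
A double point `H z₁ = H z₂` forces `z₁ᴺ = z₂ᴺ` (the map `a ↦ 2a + ā` is injective), and then,
writing `z₂ = ν z₁` with `ν` an `N`-th root of unity, both `zᵢ` solve `c z^{2N-1} = z̄` with
`c = 2N²/(2N-1)`. Multiplying by `z` shows that the nonzero solutions are exactly the `2N`-th roots
of `ρ^{2N}`, where `c ρ^{2N-2} = 1`. These split according to `zᴺ = ±ρᴺ` into two classes of `N`
points each, and the double points are precisely the pairs inside one class, giving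
`2 · (N choose 2) = N (N - 1)` of them.
-/

open Polynomial Finset

lemma eq_of_two_mul_add_conj_eq {a b : ℂ}
    (h : 2 * a + (starRingEnd ℂ) a = 2 * b + (starRingEnd ℂ) b) : a = b := by
  have hre := congrArg Complex.re h
  have him := congrArg Complex.im h
  simp only [Complex.add_re, Complex.add_im, Complex.mul_re, Complex.mul_im, Complex.conj_re,
    Complex.conj_im, Complex.re_ofNat, Complex.im_ofNat] at hre him
  exact Complex.ext (by linarith) (by linarith)

lemma ne_zero_of_pow_eq_pow_of_ne {M₀ : Type*} [MonoidWithZero M₀] [NoZeroDivisors M₀] {n : ℕ}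
    (hn : n ≠ 0) {a b : M₀} (hab : a ≠ b) (h : a ^ n = b ^ n) : a ≠ 0 := by
  rintro rfl
  exact hab (pow_eq_zero_iff hn |>.1 (h ▸ zero_pow hn)).symm

lemma neg_mul_pow_add_conj_mul_of_pow_eq_one (c : ℂ) {n : ℕ} (hn : n ≠ 0) {ν : ℂ}
    (hν : ν ^ n = 1) (z : ℂ) :
    -c * (ν * z) ^ (2 * n - 1) + (starRingEnd ℂ) (ν * z)
      = ν⁻¹ * (-c * z ^ (2 * n - 1) + (starRingEnd ℂ) z) := by
  have hν0 : ν ≠ 0 := by rintro rfl; simp [hn] at hν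
  have hconj : (starRingEnd ℂ) ν = ν⁻¹ := by
    have hnorm : ‖ν‖ = 1 :=
      (pow_left_inj₀ (norm_nonneg ν) zero_le_one hn).1 (by rw [← norm_pow, hν, norm_one, one_pow])
    rw [Complex.inv_def, Complex.normSq_eq_norm_sq, hnorm]
    simp
  have hpow : ν ^ (2 * n - 1) = ν⁻¹ := by
    rw [pow_sub₀ ν hν0 (by omega), pow_mul', hν, one_pow, pow_one, one_mul]
  rw [map_mul, hconj, mul_pow, hpow]
  ring

lemma exists_pos_mul_pow_eq_one {c : ℝ} (hc : 0 < c) {k : ℕ} (hk : k ≠ 0) :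
    ∃ ρ : ℝ, 0 < ρ ∧ c * ρ ^ k = 1 :=
  ⟨c⁻¹ ^ (k⁻¹ : ℝ), by positivity, by
    rw [Real.rpow_inv_natCast_pow (inv_nonneg.2 hc.le) hk, mul_inv_cancel₀ hc.ne']⟩

/-- Multiplying by `z` turns the equation into `c zⁿ = |z|²`, which pins down `|z| = ρ`. -/
lemma ofReal_mul_pow_pred_eq_conj_iff {c ρ : ℝ} {n : ℕ} (hn : 3 ≤ n) (hρ : 0 < ρ)
    (hcρ : c * ρ ^ (n - 2) = 1) {z : ℂ} (hz : z ≠ 0) :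
    (c : ℂ) * z ^ (n - 1) = (starRingEnd ℂ) z ↔ z ^ n = (ρ : ℂ) ^ n := by
  have hc : 0 < c := pos_of_mul_pos_left (hcρ ▸ one_pos) (by positivity)
  have hcρn : c * ρ ^ n = ρ ^ 2 := by
    rw [← Nat.sub_add_cancel (by omega : 2 ≤ n), pow_add, ← mul_assoc, hcρ, one_mul]
  have hmul_z : (c : ℂ) * z ^ (n - 1) = (starRingEnd ℂ) z ↔ (c : ℂ) * z ^ n = (‖z‖ : ℂ) ^ 2 := by
    rw [← mul_left_inj' hz, mul_assoc, pow_sub_one_mul (by omega), Complex.conj_mul']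
  have norm_eq_of_pow_eq : z ^ n = (ρ : ℂ) ^ n → ‖z‖ = ρ := fun h =>
    (pow_left_inj₀ (norm_nonneg z) hρ.le (n := n) (by omega)).1 (by
      rw [← norm_pow, h, norm_pow, Complex.norm_real, Real.norm_of_nonneg hρ.le])
  rw [hmul_z]
  constructor
  · intro h
    have hnorm : c * ‖z‖ ^ n = ‖z‖ ^ 2 := by
      simpa [norm_pow, Real.norm_of_nonneg hc.le] using congrArg norm h
    have hzρ : ‖z‖ = ρ := by
      have hz2 : ‖z‖ ^ 2 ≠ 0 := pow_ne_zero 2 (norm_ne_zero_iff.2 hz)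
      have : c * ‖z‖ ^ (n - 2) = c * ρ ^ (n - 2) := by
        rw [hcρ, ← mul_left_inj' hz2, one_mul, mul_assoc, ← pow_add,
          Nat.sub_add_cancel (by omega), hnorm]
      exact (pow_left_inj₀ (norm_nonneg z) hρ.le (n := n - 2) (by omega)).1
        (mul_left_cancel₀ hc.ne' this)
    refine mul_left_cancel₀ (Complex.ofReal_ne_zero.2 hc.ne') ?_
    rw [h, hzρ]
    exact_mod_cast hcρn.symm
  · intro h
    rw [h, norm_eq_of_pow_eq h]
    exact_mod_cast hcρn

noncomputable def hdegCoeff (N : ℕ) : ℝ := 2 * N ^ 2 / (2 * N - 1)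

lemma hdegCoeff_pos {N : ℕ} (hN : N ≠ 0) : 0 < hdegCoeff N := by
  have : (1 : ℝ) ≤ N := by exact_mod_cast Nat.one_le_iff_ne_zero.2 hN
  unfold hdegCoeff
  exact div_pos (by positivity) (by linarith)

lemma Hdeg_apply (N : ℕ) (z : ℂ) :
    Hdeg N z = (2 * z ^ N + (starRingEnd ℂ) z ^ N,
      -(hdegCoeff N : ℂ) * z ^ (2 * N - 1) + (starRingEnd ℂ) z) := by
  simp [Hdeg, hdegCoeff]

/-- Writing `z₂ = ν z₁` with `νᴺ = 1`, `ν ≠ 1`, the second coordinate of `Hdeg N z₂` is `ν⁻¹` times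
that of `Hdeg N z₁`, so both vanish. -/
lemma Hdeg_eq_Hdeg_iff {N : ℕ} (hN : N ≠ 0) {z₁ z₂ : ℂ} (hne : z₁ ≠ z₂) :
    Hdeg N z₁ = Hdeg N z₂ ↔ z₁ ^ N = z₂ ^ N ∧
      (hdegCoeff N : ℂ) * z₁ ^ (2 * N - 1) = (starRingEnd ℂ) z₁ ∧
      (hdegCoeff N : ℂ) * z₂ ^ (2 * N - 1) = (starRingEnd ℂ) z₂ := by
  set c : ℂ := (hdegCoeff N : ℂ)
  simp only [Hdeg_apply, Prod.mk.injEq, ← map_pow]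
  constructor
  · rintro ⟨h₁, h₂⟩
    have hpow : z₁ ^ N = z₂ ^ N := eq_of_two_mul_add_conj_eq h₁
    have hz₁ : z₁ ≠ 0 := ne_zero_of_pow_eq_pow_of_ne hN hne hpow
    set ν := z₂ / z₁
    have hz₂ : z₂ = ν * z₁ := (div_mul_cancel₀ z₂ hz₁).symm
    have hν : ν ^ N = 1 := by rw [div_pow, hpow, div_self (hpow ▸ pow_ne_zero N hz₁)]
    have hν_inv : ν⁻¹ ≠ 1 := by
      rw [inv_ne_one]
      intro h
      exact hne (by rw [hz₂, h, one_mul])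
    rw [hz₂, neg_mul_pow_add_conj_mul_of_pow_eq_one c hN hν] at h₂
    have hzero : -c * z₁ ^ (2 * N - 1) + (starRingEnd ℂ) z₁ = 0 := by
      have : (1 - ν⁻¹) * (-c * z₁ ^ (2 * N - 1) + (starRingEnd ℂ) z₁) = 0 := by
        linear_combination h₂
      exact (mul_eq_zero.1 this).resolve_left (sub_ne_zero.2 hν_inv.symm)
    have hzero₂ : -c * z₂ ^ (2 * N - 1) + (starRingEnd ℂ) z₂ = 0 := by
      rw [hz₂, neg_mul_pow_add_conj_mul_of_pow_eq_one c hN hν, hzero, mul_zero]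
    exact ⟨hpow, by linear_combination -hzero, by linear_combination -hzero₂⟩
  · rintro ⟨hpow, h₁, h₂⟩
    exact ⟨by rw [hpow], by linear_combination h₂ - h₁⟩

lemma Hdeg_eq_Hdeg_iff_of_mul_pow_eq_one {N : ℕ} (hN : 2 ≤ N) {ρ : ℝ} (hρ : 0 < ρ)
    (hcρ : hdegCoeff N * ρ ^ (2 * N - 2) = 1) {z₁ z₂ : ℂ} (hne : z₁ ≠ z₂) :
    Hdeg N z₁ = Hdeg N z₂ ↔
      z₁ ^ N = (ρ : ℂ) ^ N ∧ z₂ ^ N = (ρ : ℂ) ^ N ∨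
        z₁ ^ N = -(ρ : ℂ) ^ N ∧ z₂ ^ N = -(ρ : ℂ) ^ N := by
  have hρN : (ρ : ℂ) ^ N ≠ 0 := pow_ne_zero N (Complex.ofReal_ne_zero.2 hρ.ne')
  have hsol : ∀ z : ℂ, z ≠ 0 → ((hdegCoeff N : ℂ) * z ^ (2 * N - 1) = (starRingEnd ℂ) z ↔
      z ^ N = (ρ : ℂ) ^ N ∨ z ^ N = -(ρ : ℂ) ^ N) := fun z hz => by
    rw [ofReal_mul_pow_pred_eq_conj_iff (by omega) hρ hcρ hz, pow_mul', pow_mul',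
      sq_eq_sq_iff_eq_or_eq_neg]
  have hne_zero : ∀ z : ℂ, (z ^ N = (ρ : ℂ) ^ N ∨ z ^ N = -(ρ : ℂ) ^ N) → z ≠ 0 := by
    rintro z h rfl
    rw [zero_pow (by omega)] at h
    rcases h with h | h
    exacts [hρN h.symm, hρN (zero_eq_neg.1 h)]
  rw [Hdeg_eq_Hdeg_iff (by omega) hne]
  constructor
  · rintro ⟨hpow, h₁, h₂⟩
    rw [hsol z₁ (ne_zero_of_pow_eq_pow_of_ne (by omega) hne hpow)] at h₁
    rw [← hpow]
    tauto
  · intro h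
    have hpow : z₁ ^ N = z₂ ^ N := by rcases h with ⟨h₁, h₂⟩ | ⟨h₁, h₂⟩ <;> rw [h₁, h₂]
    have h₁ : z₁ ^ N = (ρ : ℂ) ^ N ∨ z₁ ^ N = -(ρ : ℂ) ^ N := by tauto
    have h₂ : z₂ ^ N = (ρ : ℂ) ^ N ∨ z₂ ^ N = -(ρ : ℂ) ^ N := by tauto
    exact ⟨hpow, (hsol z₁ (hne_zero z₁ h₁)).2 h₁, (hsol z₂ (hne_zero z₂ h₂)).2 h₂⟩

lemma card_nthRootsFinset_of_ne_zero {n : ℕ} (hn : n ≠ 0) {a : ℂ} (ha : a ≠ 0) :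
    #(nthRootsFinset n a) = n := by
  classical
  have hζ := Complex.isPrimitiveRoot_exp n hn
  rw [nthRootsFinset_def, Multiset.toFinset_card_of_nodup (hζ.nthRoots_nodup ha),
    hζ.card_nthRoots, if_pos (IsAlgClosed.exists_pow_nat_eq a (Nat.pos_of_ne_zero hn))]

lemma ncard_setOf_pair_mem_or_mem {α : Type*} {A B : Finset α} (hAB : Disjoint A B) :
    {s : Set α | ∃ x y, x ≠ y ∧ s = {x, y} ∧ (x ∈ A ∧ y ∈ A ∨ x ∈ B ∧ y ∈ B)}.ncard =
      (#A).choose 2 + (#B).choose 2 := by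
  classical
  have hset : {s : Set α | ∃ x y, x ≠ y ∧ s = {x, y} ∧ (x ∈ A ∧ y ∈ A ∨ x ∈ B ∧ y ∈ B)} =
      (↑) '' (↑(A.powersetCard 2 ∪ B.powersetCard 2) : Set (Finset α)) := by
    ext s
    simp only [Set.mem_ofPred_eq, Set.mem_image, coe_union, Set.mem_union, mem_coe,
      mem_powersetCard, card_eq_two]
    constructor
    · rintro ⟨x, y, hxy, rfl, h⟩
      refine ⟨{x, y}, ?_, coe_pair⟩
      rcases h with ⟨hx, hy⟩ | ⟨hx, hy⟩
      · exact .inl ⟨insert_subset hx (singleton_subset_iff.2 hy), x, y, hxy, rfl⟩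
      · exact .inr ⟨insert_subset hx (singleton_subset_iff.2 hy), x, y, hxy, rfl⟩
    · rintro ⟨t, ⟨hA, x, y, hxy, rfl⟩ | ⟨hB, x, y, hxy, rfl⟩, rfl⟩
      · exact ⟨x, y, hxy, coe_pair, .inl ⟨hA (by simp), hA (by simp)⟩⟩
      · exact ⟨x, y, hxy, coe_pair, .inr ⟨hB (by simp), hB (by simp)⟩⟩
  have hdisj : Disjoint (A.powersetCard 2) (B.powersetCard 2) := by
    refine disjoint_left.2 fun t htA htB => ?_
    rw [mem_powersetCard] at htA htB
    obtain ⟨x, hx⟩ := card_pos.1 (htA.2 ▸ two_pos)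
    exact disjoint_left.1 hAB (htA.1 hx) (htB.1 hx)
  rw [hset, Set.ncard_image_of_injective _ coe_injective, Set.ncard_coe_finset,
    card_union_of_disjoint hdisj, card_powersetCard, card_powersetCard]

theorem stmt_8 (N : ℕ) (hN : 2 ≤ N) :
    {s : Set ℂ | ∃ z₁ z₂ : ℂ, z₁ ≠ z₂ ∧ s = {z₁, z₂} ∧ Hdeg N z₁ = Hdeg N z₂}.ncard
      = N * (N - 1) := by
  obtain ⟨ρ, hρ, hcρ⟩ := exists_pos_mul_pow_eq_one (hdegCoeff_pos (by omega : N ≠ 0))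
    (by omega : 2 * N - 2 ≠ 0)
  have hρN : (ρ : ℂ) ^ N ≠ 0 := pow_ne_zero N (Complex.ofReal_ne_zero.2 hρ.ne')
  set A := nthRootsFinset N ((ρ : ℂ) ^ N)
  set B := nthRootsFinset N (-(ρ : ℂ) ^ N)
  have hAB : Disjoint A B := disjoint_left.2 fun z hA hB => by
    rw [mem_nthRootsFinset (by omega)] at hA hB
    exact hρN (self_eq_neg.1 (hA.symm.trans hB))
  have hset : {s : Set ℂ | ∃ z₁ z₂ : ℂ, z₁ ≠ z₂ ∧ s = {z₁, z₂} ∧ Hdeg N z₁ = Hdeg N z₂} =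
      {s : Set ℂ | ∃ x y, x ≠ y ∧ s = {x, y} ∧ (x ∈ A ∧ y ∈ A ∨ x ∈ B ∧ y ∈ B)} := by
    ext s
    simp only [Set.mem_ofPred_eq, A, B, mem_nthRootsFinset (by omega : 0 < N)]
    exact exists₂_congr fun z₁ z₂ => and_congr_right fun hne => and_congr_right fun _ =>
      Hdeg_eq_Hdeg_iff_of_mul_pow_eq_one hN hρ hcρ hne
  rw [hset, ncard_setOf_pair_mem_or_mem hAB, card_nthRootsFinset_of_ne_zero (by omega) hρN,
    card_nthRootsFinset_of_ne_zero (by omega) (neg_ne_zero.2 hρN), ← two_mul,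
    Nat.choose_two_right, Nat.mul_div_cancel' (Nat.even_mul_pred_self N).two_dvd]
end

section
/- Let a, b, c, α, β ∈ ℂ with α real and nonzero, b ≠ 0, and satisfying a·b̄ = β², c·b̄ = α². Define F : ℂ∖{0} → ℂ² by F(z) = (az + b z̄ + c/z, α·ln z + α·ln z̄ + βz − β̄z̄) (well-defined since α ln z + α ln z̄ = 2α ln|z| is single-valued). Then F is injective. -/
/-!
Equal second coordinates give `α log|z₁| = α log|z₂|` (real part) and then
`Im (β z₁) = Im (β z₂)` (imaginary part). On the circle `|z| = r`, clearing denominators in the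
first coordinate and using `a b̄ = β²`, `c b̄ = α²` turns its equality into
`((|β|² + |b|²) r² + α²) (z₁ - z₂) = 0`, and the first factor is positive.
-/

open Complex ComplexConjugate

namespace Complex

theorem norm_sq_add_mul_sub_eq_zero {a b c β γ z₁ z₂ : ℂ} (h1 : a * conj b = β ^ 2)
    (h2 : c * conj b = γ) (hz₁ : z₁ ≠ 0) (hz₂ : z₂ ≠ 0) (hnorm : ‖z₁‖ = ‖z₂‖)
    (hβ : β * (z₁ - z₂) = conj β * (conj z₁ - conj z₂))
    (hA : a * z₁ + b * conj z₁ + c / z₁ = a * z₂ + b * conj z₂ + c / z₂) :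
    (((‖β‖ : ℂ) ^ 2 + (‖b‖ : ℂ) ^ 2) * (‖z₁‖ : ℂ) ^ 2 + γ) * (z₁ - z₂) = 0 := by
  have hA' : a * z₁ * z₁ * z₂ + b * conj z₁ * z₁ * z₂ + c * z₂
      = a * z₂ * z₁ * z₂ + b * conj z₂ * z₁ * z₂ + c * z₁ := by
    field_simp at hA
    linear_combination hA
  have hz₂' : z₂ * conj z₂ = (‖z₁‖ : ℂ) ^ 2 := by rw [hnorm, mul_conj']
  linear_combination (-conj b) * hA' + (z₁ * z₂ * (z₁ - z₂)) * h1 - (z₁ - z₂) * h2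
    + (β * z₁ * z₂) * hβ + (β * conj β + b * conj b) * z₂ * mul_conj' z₁
    - (β * conj β + b * conj b) * z₁ * hz₂'
    - (‖z₁‖ : ℂ) ^ 2 * (z₁ - z₂) * (mul_conj' β + mul_conj' b)

end Complex

theorem stmt_11_general (a b c β : ℂ) (α : ℝ) (hα : α ≠ 0)
    (h1 : a * (starRingEnd ℂ) b = β ^ 2) (h2 : c * (starRingEnd ℂ) b = (α : ℂ) ^ 2) :
    Set.InjOn
      (fun z : ℂ =>
        (a * z + b * (starRingEnd ℂ) z + c / z,
         ((2 * α * Real.log ‖z‖ : ℝ) : ℂ) + β * z -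
           (starRingEnd ℂ) β * (starRingEnd ℂ) z))
      {z : ℂ | z ≠ 0} := by
  intro z₁ hz₁ z₂ hz₂ h
  obtain ⟨hA, hB⟩ := Prod.ext_iff.mp h
  have hlog : ((2 * α * Real.log ‖z₁‖ : ℝ) : ℂ) = ((2 * α * Real.log ‖z₂‖ : ℝ) : ℂ) := by
    simpa using congrArg re hB
  have hnorm : ‖z₁‖ = ‖z₂‖ :=
    Real.log_injOn_pos (norm_pos_iff.mpr hz₁) (norm_pos_iff.mpr hz₂)
      (mul_left_cancel₀ (by positivity) (ofReal_injective hlog))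
  have hβ : β * (z₁ - z₂) = conj β * (conj z₁ - conj z₂) := by
    linear_combination hB - hlog
  have hpos : ((‖β‖ : ℂ) ^ 2 + (‖b‖ : ℂ) ^ 2) * (‖z₁‖ : ℂ) ^ 2 + (α : ℂ) ^ 2 ≠ 0 := by
    exact_mod_cast (by positivity :
      (‖β‖ ^ 2 + ‖b‖ ^ 2) * ‖z₁‖ ^ 2 + α ^ 2 ≠ 0)
  exact sub_eq_zero.mp <| (mul_eq_zero.mp <|
    norm_sq_add_mul_sub_eq_zero h1 h2 hz₁ hz₂ hnorm hβ hA).resolve_left hpos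

theorem stmt_11 (a b c β : ℂ) (α : ℝ) (hα : α ≠ 0) (hb : b ≠ 0)
    (h1 : a * (starRingEnd ℂ) b = β ^ 2) (h2 : c * (starRingEnd ℂ) b = (α : ℂ) ^ 2) :
    Set.InjOn
      (fun z : ℂ =>
        (a * z + b * (starRingEnd ℂ) z + c / z,
         ((2 * α * Real.log ‖z‖ : ℝ) : ℂ) + β * z -
           (starRingEnd ℂ) β * (starRingEnd ℂ) z))
      {z : ℂ | z ≠ 0} :=
  stmt_11_general a b c β α hα h1 h2
end
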